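/- arXiv:1007.2212 — 4 statements merged into one kernel-verified Lean document; each statement's English description precedes it below -/
import Mathlib

section
/- Among all accepting runs of the product automaton with finite cost, there exists an accepting run in prefix-suffix structure (a finite prefix from an initial state to an accepting state f, followed by infinite periodic repetition of a finite cycle at f containing no other occurrence of f) whose cost is less than or equal to the infimum of costs over all accepting runs. -/
open scoped Classical

/-- Cumulative time sequence of a run. -/
def timeSeq {V : Type*} (w : V → V → ℝ) (r : ℕ → V) : ℕ → ℝ
  | 0 => 0
  | n + 1 => timeSeq w r n + w (r n) (r (n+1))

/-- Cost of an infinite run: limsup of gaps between consecutive visit times to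
`Sπ`; `⊤` if `Sπ` is visited only finitely often. -/
noncomputable def runCost {V : Type*} (w : V → V → ℝ) (Sπ : Set V) (r : ℕ → V) : EReal :=
  if {i | r i ∈ Sπ}.Infinite then
    Filter.limsup
      (fun n => ((timeSeq w r (Nat.nth (fun i => r i ∈ Sπ) (n+1))
        - timeSeq w r (Nat.nth (fun i => r i ∈ Sπ) n) : ℝ) : EReal))
      Filter.atTop
  else ⊤

/-- A run of the product automaton: starts at an initial state and follows edges. -/
def IsRun {V : Type*} (E : V → V → Prop) (S0 : Set V) (r : ℕ → V) : Prop :=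
  r 0 ∈ S0 ∧ ∀ i, E (r i) (r (i+1))

/-- A run is accepting if it visits the accepting set infinitely often. -/
def IsAccepting {V : Type*} (F : Set V) (r : ℕ → V) : Prop :=
  ∀ N, ∃ n ≥ N, r n ∈ F

/-- Prefix-suffix structure: a finite prefix reaching an accepting state `f = r N`
(with no earlier occurrence of `f`), followed by the infinite periodic repetition
of a finite cycle at `f` containing no other occurrence of `f`. -/
def IsPrefixSuffix {V : Type*} (F : Set V) (r : ℕ → V) : Prop :=
  ∃ N T, 0 < T ∧ r N ∈ F ∧
    (∀ i < N, r i ≠ r N) ∧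
    (∀ i ≥ N, r (i + T) = r i) ∧
    (∀ i, N < i → i < N + T → r i ≠ r N)

/-!
Gaps between visits to `Sπ` are weights of walks, and since the weights are positive only
finitely many walk weights lie below any bound. Hence the cost of a run, a limsup of gaps, is
itself a gap value that eventually bounds all gaps, and the infimum of the costs of accepting runs
is attained by some run `r`. An accepting state `f` recurs in `r`; cut out the cycle between two
consecutive visits of `f`, starting at a visit that minimizes the time until the next visit to
`Sπ`. Repeating this cycle forever, the only new gap is the one that wraps around the cycle, and
by the choice of the starting visit it is bounded by a gap of `r`, so the lasso costs no more
than `r`.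
-/

open Finset Filter

section Time

variable {V : Type*} (w : V → V → ℝ)

lemma timeSeq_add_sub_eq_sum (r : ℕ → V) (a n : ℕ) :
    timeSeq w r (a + n) - timeSeq w r a = ∑ k ∈ range n, w (r (a + k)) (r (a + k + 1)) := by
  induction n with
  | zero => simp
  | succ n ih => rw [sum_range_succ, ← ih, ← add_assoc, timeSeq]; ring

lemma timeSeq_add_sub_eq_of_shift {r s : ℕ → V} {a b n : ℕ}
    (h : ∀ k ≤ n, s (a + k) = r (b + k)) :
    timeSeq w s (a + n) - timeSeq w s a = timeSeq w r (b + n) - timeSeq w r b := by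
  rw [timeSeq_add_sub_eq_sum, timeSeq_add_sub_eq_sum]
  refine sum_congr rfl fun k hk => ?_
  rw [mem_range] at hk
  rw [h k hk.le, add_assoc, add_assoc, h (k + 1) hk]

lemma timeSeq_strictMono (hw : ∀ u v, 0 < w u v) (r : ℕ → V) : StrictMono (timeSeq w r) :=
  strictMono_nat_of_lt_succ fun n => by rw [timeSeq]; linarith [hw (r n) (r (n + 1))]

lemma mul_le_timeSeq_add_sub {m : ℝ} (hwm : ∀ u v, m ≤ w u v) (r : ℕ → V) (a n : ℕ) :
    n * m ≤ timeSeq w r (a + n) - timeSeq w r a := by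
  rw [timeSeq_add_sub_eq_sum]
  simpa using card_nsmul_le_sum (range n) _ m fun k _ => hwm (r (a + k)) (r (a + k + 1))

def walkWeights (K : ℕ) : Set ℝ :=
  {x | ∃ (s : ℕ → V) (n : ℕ), n ≤ K ∧ ∑ k ∈ range n, w (s k) (s (k + 1)) = x}

lemma walkWeights_finite [Finite V] (K : ℕ) : (walkWeights w K).Finite := by
  induction K with
  | zero =>
    refine (Set.finite_singleton 0).subset ?_
    rintro _ ⟨s, n, hn, rfl⟩
    simp [Nat.le_zero.1 hn]
  | succ K ih =>
    refine (ih.union (Set.finite_iUnion fun p : V × V => ih.image (w p.1 p.2 + ·))).subset ?_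
    rintro _ ⟨s, _ | n, hn, rfl⟩
    · exact Or.inl ⟨s, 0, K.zero_le, rfl⟩
    · refine Or.inr (Set.mem_iUnion.2
        ⟨(s 0, s 1), _, ⟨fun k => s (k + 1), n, by omega, rfl⟩, ?_⟩)
      rw [sum_range_succ', add_comm]

lemma timeSeq_sub_mem_walkWeights {m c : ℝ} (hm : 0 < m) (hwm : ∀ u v, m ≤ w u v)
    (r : ℕ → V) {a b : ℕ} (hab : a ≤ b) (h : timeSeq w r b - timeSeq w r a ≤ c) :
    timeSeq w r b - timeSeq w r a ∈ walkWeights w ⌈c / m⌉₊ := by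
  obtain ⟨n, rfl⟩ := Nat.exists_eq_add_of_le hab
  have hn : (n : ℝ) ≤ c / m := by
    rw [le_div_iff₀ hm]; linarith [mul_le_timeSeq_add_sub w hwm r a n]
  rw [timeSeq_add_sub_eq_sum]
  exact ⟨fun k => r (a + k), n, Nat.cast_le.1 (hn.trans (Nat.le_ceil _)), rfl⟩

end Time

lemma Filter.exists_limsup_eq_and_eventually_le {α β : Type*} [CompleteLinearOrder α]
    {f : Filter β} [f.NeBot] {u : β → α} {S : Set α} (hS : S.Finite)
    (h : ∀ᶠ n in f, u n ∈ S) : ∃ x ∈ S, limsup u f = x ∧ ∀ᶠ n in f, u n ≤ x := by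
  set S' := {x ∈ S | ∃ᶠ n in f, u n = x}
  have hS' : ∀ᶠ n in f, u n ∈ S' := by
    have hrare : ∀ᶠ n in f, ∀ x ∈ S \ S', u n ≠ x :=
      (hS.sdiff).eventually_all.2 fun x hx => not_frequently.1 fun hx' => hx.2 ⟨hx.1, hx'⟩
    filter_upwards [h, hrare] with n hn hrn
    by_contra hn'
    exact hrn (u n) ⟨hn, hn'⟩ rfl
  obtain ⟨x, hx, hmax⟩ := Set.exists_max_image S' id (hS.subset fun _ hx => hx.1)
    (let ⟨n, hn⟩ := hS'.exists; ⟨u n, hn⟩)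
  have hle : ∀ᶠ n in f, u n ≤ x := hS'.mono fun n hn => hmax _ hn
  refine ⟨x, hx.1, le_antisymm (limsup_le_of_le (h := hle)) ?_, hle⟩
  exact le_limsup_of_frequently_le (hx.2.mono fun n hn => hn.ge)

lemma exists_isLeast_of_finite_inter_Iic {α : Type*} [LinearOrder α] {S : Set α} {x : α}
    (hx : x ∈ S) (hfin : (S ∩ Set.Iic x).Finite) : ∃ y, IsLeast S y := by
  obtain ⟨y, hy, hmin⟩ := Set.exists_min_image _ id hfin ⟨x, hx, le_rfl⟩
  refine ⟨y, hy.1, fun z hz => ?_⟩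
  rcases le_total z x with hzx | hxz
  · exact hmin z ⟨hz, hzx⟩
  · exact hy.2.trans hxz

/-- Junk value `0` when `s` has no element `≥ n`. -/
noncomputable def nextVisit (s : Set ℕ) (n : ℕ) : ℕ := sInf (s ∩ Set.Ici n)

section NextVisit

variable {s : Set ℕ}

lemma nextVisit_mem (hs : s.Infinite) (n : ℕ) : nextVisit s n ∈ s ∧ n ≤ nextVisit s n :=
  have ⟨m, hm, hnm⟩ := hs.exists_gt n
  Nat.sInf_mem (s := s ∩ Set.Ici n) ⟨m, hm, hnm.le⟩

lemma nextVisit_le {n m : ℕ} (hm : m ∈ s) (hnm : n ≤ m) : nextVisit s n ≤ m :=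
  Nat.sInf_le ⟨hm, hnm⟩

lemma nextVisit_eq_of_le_of_le (hs : s.Infinite) {n k : ℕ} (hnk : n ≤ k)
    (hk : k ≤ nextVisit s n) : nextVisit s k = nextVisit s n :=
  le_antisymm (nextVisit_le (nextVisit_mem hs n).1 hk)
    (nextVisit_le (nextVisit_mem hs k).1 (hnk.trans (nextVisit_mem hs k).2))

end NextVisit

section Cost

variable {V : Type*} (w : V → V → ℝ) (Sπ : Set V)

lemma timeSeq_monotone (hw : ∀ u v, 0 ≤ w u v) (r : ℕ → V) : Monotone (timeSeq w r) :=
  monotone_nat_of_le_succ fun n => by rw [timeSeq]; linarith [hw (r n) (r (n + 1))]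

def RevisitsWithin (r : ℕ → V) (c : ℝ) (N : ℕ) : Prop :=
  ∀ q ≥ N, r q ∈ Sπ → ∃ q' > q, r q' ∈ Sπ ∧ timeSeq w r q' ≤ timeSeq w r q + c

variable {w Sπ}

lemma infinite_visits_of_revisitsWithin {r : ℕ → V} {c : ℝ} {N : ℕ}
    (h : RevisitsWithin w Sπ r c N) (hq : ∃ q ≥ N, r q ∈ Sπ) :
    {i | r i ∈ Sπ}.Infinite := by
  intro hfin
  obtain ⟨q, ⟨hqN, hqπ⟩, hmax⟩ := Set.exists_max_image {i | N ≤ i ∧ r i ∈ Sπ} id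
    (hfin.subset fun _ hi => hi.2) (let ⟨q, hq⟩ := hq; ⟨q, hq⟩)
  obtain ⟨q', hqq', hq'π, -⟩ := h q hqN hqπ
  exact (hmax q' ⟨hqN.trans hqq'.le, hq'π⟩).not_gt hqq'

lemma runCost_le_of_revisitsWithin (hw : ∀ u v, 0 ≤ w u v) {r : ℕ → V} {c : ℝ} {N : ℕ}
    (h : RevisitsWithin w Sπ r c N) (hq : ∃ q ≥ N, r q ∈ Sπ) : runCost w Sπ r ≤ c := by
  have hinf := infinite_visits_of_revisitsWithin h hq
  rw [runCost, if_pos hinf]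
  refine limsup_le_of_le (h := eventually_atTop.2 ⟨N, fun n hn => ?_⟩)
  obtain ⟨q', hq', hq'π, hq'c⟩ :=
    h _ (hn.trans (Nat.nth_strictMono hinf).le_apply) (Nat.nth_mem_of_infinite hinf n)
  have hnext : Nat.nth (fun i => r i ∈ Sπ) (n + 1) ≤ q' :=
    not_lt.1 fun hlt => (Nat.le_nth_of_lt_nth_succ hlt hq'π).not_gt hq'
  exact EReal.coe_le_coe_iff.2 (by linarith [timeSeq_monotone w hw r hnext])

lemma runCost_mem_walkWeights_and_revisitsWithin {m : ℝ} (hm : 0 < m) (hwm : ∀ u v, m ≤ w u v)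
    [Finite V] {r : ℕ → V} {b : ℝ} (hb : runCost w Sπ r < b) :
    {i | r i ∈ Sπ}.Infinite ∧ ∃ c ∈ walkWeights w ⌈b / m⌉₊,
      runCost w Sπ r = c ∧ ∃ N, RevisitsWithin w Sπ r c N := by
  have hinf : {i | r i ∈ Sπ}.Infinite := by
    by_contra hfin
    rw [runCost, if_neg hfin] at hb
    exact not_top_lt hb
  set p := fun i => r i ∈ Sπ
  set gap := fun n => timeSeq w r (Nat.nth p (n + 1)) - timeSeq w r (Nat.nth p n)
  have hcost : runCost w Sπ r = limsup (fun n => (gap n : EReal)) atTop := by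
    rw [runCost, if_pos hinf]
  have hmem : ∀ᶠ n in atTop, (gap n : EReal) ∈ (↑) '' walkWeights w ⌈b / m⌉₊ := by
    refine (eventually_lt_of_limsup_lt (hcost ▸ hb)).mono fun n hn => ⟨gap n, ?_, rfl⟩
    exact timeSeq_sub_mem_walkWeights w hm hwm r
      ((Nat.nth_strictMono hinf).monotone n.le_succ) (EReal.coe_lt_coe_iff.1 hn).le
  obtain ⟨_, ⟨c, hc, rfl⟩, hlim, hle⟩ :=
    exists_limsup_eq_and_eventually_le ((walkWeights_finite w _).image _) hmem
  obtain ⟨n₀, hn₀⟩ := eventually_atTop.1 hle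
  refine ⟨hinf, c, hc, hcost.trans hlim, Nat.nth p n₀, fun q hq hqπ => ?_⟩
  have hcount : Nat.nth p (Nat.count p q) = q := Nat.nth_count (p := p) hqπ
  have hk : n₀ ≤ Nat.count p q := (Nat.nth_le_nth hinf).1 (by rwa [hcount])
  refine ⟨Nat.nth p (Nat.count p q + 1), ?_, Nat.nth_mem_of_infinite hinf _, ?_⟩
  · exact hcount.symm.trans_lt ((Nat.nth_lt_nth hinf).2 (Nat.lt_succ_self _))
  · have := EReal.coe_le_coe_iff.1 (hn₀ _ hk)
    simp only [gap, hcount] at this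
    linarith

end Cost

section Lasso

variable {V : Type*}

def lasso (r : ℕ → V) (N i T : ℕ) (n : ℕ) : V :=
  if n < N then r n else r (i + (n - N) % T)

variable {r : ℕ → V} {N i T : ℕ}

lemma lasso_of_lt {n : ℕ} (h : n < N) : lasso r N i T n = r n := if_pos h

lemma lasso_add (x : ℕ) : lasso r N i T (N + x) = r (i + x % T) := by simp [lasso]

lemma lasso_of_le (hN : r N = r i) {n : ℕ} (h : n ≤ N) : lasso r N i T n = r n := by
  rcases h.lt_or_eq with h | rfl
  · exact lasso_of_lt h
  · simpa [hN] using lasso_add (r := r) (N := n) (i := i) (T := T) 0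

lemma lasso_add_of_le (hcyc : r (i + T) = r i) {x : ℕ} (hx : x ≤ T) :
    lasso r N i T (N + x) = r (i + x) := by
  rw [lasso_add]
  rcases hx.lt_or_eq with hx | rfl
  · rw [Nat.mod_eq_of_lt hx]
  · rw [Nat.mod_self, add_zero, hcyc]

lemma lasso_add_mod (x : ℕ) : lasso r N i T (N + x) = lasso r N i T (N + x % T) := by
  rw [lasso_add, lasso_add, Nat.mod_mod]

lemma lasso_add_period {n : ℕ} (hn : N ≤ n) : lasso r N i T (n + T) = lasso r N i T n := by
  obtain ⟨x, rfl⟩ := Nat.exists_eq_add_of_le hn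
  rw [add_assoc, lasso_add, lasso_add, Nat.add_mod_right]

lemma isRun_lasso {E : V → V → Prop} {S0 : Set V} (hrun : IsRun E S0 r) (hN : r N = r i)
    (hcyc : r (i + T) = r i) (hT : 0 < T) : IsRun E S0 (lasso r N i T) := by
  refine ⟨(lasso_of_le hN N.zero_le).symm ▸ hrun.1, fun n => ?_⟩
  rcases lt_or_ge n N with hn | hn
  · rw [lasso_of_le hN hn.le, lasso_of_le hN hn]
    exact hrun.2 n
  · obtain ⟨x, rfl⟩ := Nat.exists_eq_add_of_le hn
    have hx : x % T < T := Nat.mod_lt x hT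
    have hsucc : lasso r N i T (N + (x + 1)) = lasso r N i T (N + (x % T + 1)) := by
      rw [lasso_add_mod, lasso_add_mod (x := x % T + 1), Nat.mod_add_mod]
    rw [add_assoc, hsucc, lasso_add_mod, lasso_add_of_le hcyc hx.le, lasso_add_of_le hcyc hx]
    exact hrun.2 _

lemma isAccepting_lasso {F : Set V} (hF : r i ∈ F) (hT : 0 < T) :
    IsAccepting F (lasso r N i T) := fun M =>
  ⟨N + M * T, le_add_left (Nat.le_mul_of_pos_right M hT), by
    rw [lasso_add, Nat.mul_mod_left, add_zero]; exact hF⟩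

lemma isPrefixSuffix_lasso {F : Set V} (hF : r i ∈ F) (hN : r N = r i)
    (hfirst : ∀ n < N, r n ≠ r i) (hcyc : r (i + T) = r i) (hT : 0 < T)
    (hsimple : ∀ k, 0 < k → k < T → r (i + k) ≠ r i) :
    IsPrefixSuffix F (lasso r N i T) := by
  have hρN : lasso r N i T N = r i := (lasso_of_le hN le_rfl).trans hN
  refine ⟨N, T, hT, hρN ▸ hF, fun n hn => ?_, fun n hn => lasso_add_period hn,
    fun n hn hnT => ?_⟩
  · rw [hρN, lasso_of_lt hn]
    exact hfirst n hn
  · obtain ⟨k, rfl⟩ := Nat.exists_eq_add_of_le hn.le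
    rw [hρN, lasso_add_of_le hcyc (by omega)]
    exact hsimple k (by omega) (by omega)

end Lasso

section Periodic

variable {V : Type*} {w : V → V → ℝ} {Sπ : Set V} {s : ℕ → V} {N T : ℕ}

lemma timeSeq_add_period_sub (hper : ∀ n ≥ N, s (n + T) = s n) {n : ℕ} (hn : N ≤ n) :
    timeSeq w s (n + T) - timeSeq w s n = timeSeq w s (N + T) - timeSeq w s N := by
  induction n, hn using Nat.le_induction with
  | base => rfl
  | succ n hn ih =>
    have h1 := hper n hn
    have h2 := hper (n + 1) (by omega)
    rw [show n + 1 + T = n + T + 1 by omega] at h2 ⊢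
    rw [timeSeq, timeSeq, h1, h2]
    linarith

lemma revisitsWithin_of_periodic (hT : 0 < T) (hper : ∀ n ≥ N, s (n + T) = s n) {c : ℝ}
    (h : ∀ q, N ≤ q → q < N + T → s q ∈ Sπ →
      ∃ q' > q, s q' ∈ Sπ ∧ timeSeq w s q' ≤ timeSeq w s q + c) :
    RevisitsWithin w Sπ s c N := by
  intro q
  induction q using Nat.strong_induction_on with
  | _ q ih =>
  intro hq hqπ
  rcases lt_or_ge q (N + T) with hlt | hge
  · exact h q hq hlt hqπ
  have hq' : q - T + T = q := Nat.sub_add_cancel (by omega)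
  obtain ⟨q', hq'q, hq'π, hq'c⟩ :=
    ih (q - T) (by omega) (by omega) (by rwa [← hper (q - T) (by omega), hq'])
  refine ⟨q' + T, by omega, by rwa [hper q' (by omega)], ?_⟩
  have h1 := timeSeq_add_period_sub (w := w) hper (show N ≤ q - T by omega)
  have h2 := timeSeq_add_period_sub (w := w) hper (show N ≤ q' by omega)
  rw [hq'] at h1
  linarith

end Periodic

section Wait

variable {V : Type*}

noncomputable def waitTime (w : V → V → ℝ) (Sπ : Set V) (r : ℕ → V) (n : ℕ) : ℝ :=
  timeSeq w r (nextVisit {k | r k ∈ Sπ} n) - timeSeq w r n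

variable {w : V → V → ℝ} {Sπ : Set V} {r : ℕ → V}

lemma exists_waitTime_le [Finite V] {m : ℝ} (hm : 0 < m) (hwm : ∀ u v, m ≤ w u v)
    (hπ : {k | r k ∈ Sπ}.Infinite) {s : Set ℕ} (hs : s.Nonempty) :
    ∃ i ∈ s, ∀ j ∈ s, waitTime w Sπ r i ≤ waitTime w Sπ r j := by
  obtain ⟨i₀, hi₀⟩ := hs
  have hfin : (waitTime w Sπ r '' s ∩ Set.Iic (waitTime w Sπ r i₀)).Finite := by
    refine (walkWeights_finite w ⌈waitTime w Sπ r i₀ / m⌉₊).subset ?_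
    rintro _ ⟨⟨j, -, rfl⟩, hj⟩
    exact timeSeq_sub_mem_walkWeights w hm hwm r (nextVisit_mem hπ j).2 hj
  obtain ⟨_, ⟨i, hi, rfl⟩, hleast⟩ :=
    exists_isLeast_of_finite_inter_Iic (Set.mem_image_of_mem _ hi₀) hfin
  exact ⟨i, hi, fun j hj => hleast ⟨j, hj, rfl⟩⟩

lemma nextVisit_lt_of_waitTime_le (hw : ∀ u v, 0 < w u v) (hπ : {k | r k ∈ Sπ}.Infinite)
    {i j : ℕ} (hij : i < j) (hwait : waitTime w Sπ r i ≤ waitTime w Sπ r j) :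
    nextVisit {k | r k ∈ Sπ} i < j := by
  by_contra! hj
  have hnext := nextVisit_eq_of_le_of_le hπ hij.le hj
  rw [waitTime, waitTime, hnext] at hwait
  linarith [timeSeq_strictMono w hw r hij]

variable {N i T : ℕ}

lemma timeSeq_lasso_add_sub (w : V → V → ℝ) (hcyc : r (i + T) = r i) {x : ℕ}
    (hx : x ≤ T) :
    timeSeq w (lasso r N i T) (N + x) - timeSeq w (lasso r N i T) N =
      timeSeq w r (i + x) - timeSeq w r i :=
  timeSeq_add_sub_eq_of_shift w fun _ hk => lasso_add_of_le hcyc (hk.trans hx)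

/-- Closing the cycle at `i + T` costs no more than the gap of `r` around `i + T`, because the
wait time at `i` is at most the wait time at `i + T`. -/
lemma revisitsWithin_lasso (hw : ∀ u v, 0 ≤ w u v) (hπ : {k | r k ∈ Sπ}.Infinite) {c : ℝ}
    {M : ℕ} (hrev : RevisitsWithin w Sπ r c M) (hMi : M ≤ i) (hcyc : r (i + T) = r i)
    (hT : 0 < T) (hwait : waitTime w Sπ r i ≤ waitTime w Sπ r (i + T)) :
    RevisitsWithin w Sπ (lasso r N i T) c N := by
  set π := {k | r k ∈ Sπ}
  have hρ := fun x (hx : x ≤ T) => timeSeq_lasso_add_sub (N := N) w hcyc hx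
  have hper : ∀ n ≥ N, lasso r N i T (n + T) = lasso r N i T n :=
    fun n hn => lasso_add_period hn
  refine revisitsWithin_of_periodic hT hper fun q hNq hqT hqπ => ?_
  obtain ⟨x, rfl⟩ := Nat.exists_eq_add_of_le hNq
  rw [lasso_add_of_le hcyc (by omega)] at hqπ
  set p := nextVisit π (i + x + 1)
  obtain ⟨hpπ, hpx⟩ := nextVisit_mem hπ (i + x + 1)
  have hpc : timeSeq w r p ≤ timeSeq w r (i + x) + c := by
    obtain ⟨q', hq', hq'π, hq'c⟩ := hrev (i + x) (by omega) hqπ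
    linarith [timeSeq_monotone w hw r (nextVisit_le (s := π) hq'π hq')]
  rcases le_or_gt p (i + T) with hpT | hpT
  · refine ⟨N + (p - i), by omega, ?_, ?_⟩
    · rwa [lasso_add_of_le hcyc (by omega), Nat.add_sub_cancel' (by omega)]
    · have h1 := hρ (p - i) (by omega)
      rw [Nat.add_sub_cancel' (by omega)] at h1
      linarith [hρ x (by omega)]
  · set p₀ := nextVisit π i
    obtain ⟨hp₀π, hip₀⟩ := nextVisit_mem hπ i
    have hp₀x : p₀ ≤ i + x := nextVisit_le hqπ (by omega)
    have hwrap : nextVisit π (i + T) = p := nextVisit_eq_of_le_of_le hπ (by omega) hpT.le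
    refine ⟨N + (p₀ - i) + T, by omega, ?_, ?_⟩
    · rwa [lasso_add_period (by omega), lasso_add_of_le hcyc (by omega),
        Nat.add_sub_cancel' hip₀]
    · have h1 := hρ (p₀ - i) (by omega)
      rw [Nat.add_sub_cancel' hip₀] at h1
      have h2 := timeSeq_add_period_sub (w := w) hper (show N ≤ N + (p₀ - i) by omega)
      rw [waitTime, waitTime, hwrap] at hwait
      linarith [hρ x (by omega), hρ T le_rfl]

end Wait

lemma exists_mem_infinite_visits {V : Type*} [Finite V] {F : Set V} {r : ℕ → V}
    (hacc : IsAccepting F r) : ∃ f ∈ F, {n | r n = f}.Infinite := by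
  by_contra! hfin
  have hF : {n | r n ∈ F}.Infinite := Set.infinite_of_forall_exists_gt fun a =>
    let ⟨n, hn, hnF⟩ := hacc (a + 1); ⟨n, hnF, hn⟩
  refine hF (((Set.toFinite F).biUnion fun f hf => hfin f hf).subset ?_)
  exact fun n hn => Set.mem_biUnion hn rfl

/-- The cycle runs between consecutive visits to a recurring accepting state `f`, starting at a
visit that minimizes the wait time for `Sπ`. -/
theorem exists_prefixSuffix_runCost_le {V : Type*} [Finite V] {E : V → V → Prop}
    {w : V → V → ℝ} {m : ℝ} (hm : 0 < m) (hwm : ∀ u v, m ≤ w u v) {S0 F Sπ : Set V}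
    {r : ℕ → V} (hrun : IsRun E S0 r) (hacc : IsAccepting F r) (hcost : runCost w Sπ r < ⊤) :
    ∃ ρ, IsRun E S0 ρ ∧ IsAccepting F ρ ∧ IsPrefixSuffix F ρ ∧
      runCost w Sπ ρ ≤ runCost w Sπ r := by
  have hw : ∀ u v, 0 < w u v := fun u v => hm.trans_le (hwm u v)
  obtain ⟨b, hb, -⟩ := EReal.lt_iff_exists_real_btwn.1 hcost
  obtain ⟨hπ, c, -, hc, M, hrev⟩ := runCost_mem_walkWeights_and_revisitsWithin hm hwm hb
  obtain ⟨f, hfF, hf⟩ := exists_mem_infinite_visits hacc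
  set sf := {n | r n = f}
  obtain ⟨i, ⟨hif, hMi⟩, hmin⟩ := exists_waitTime_le hm hwm hπ (s := sf ∩ Set.Ici M)
    (let ⟨n, hn, hMn⟩ := hf.exists_gt M; ⟨n, hn, hMn.le⟩)
  rw [Set.mem_Ici] at hMi
  obtain ⟨hjf, hij⟩ := nextVisit_mem hf (i + 1)
  obtain ⟨hNf, -⟩ := nextVisit_mem hf 0
  set j := nextVisit sf (i + 1)
  set N := nextVisit sf 0
  have hcyc : r (i + (j - i)) = r i := by
    rw [Nat.add_sub_cancel' (by omega)]
    exact hjf.trans hif.symm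
  have hwait : waitTime w Sπ r i ≤ waitTime w Sπ r (i + (j - i)) := by
    rw [Nat.add_sub_cancel' (by omega)]
    exact hmin j ⟨hjf, Set.mem_Ici.2 (by omega)⟩
  obtain ⟨hvisitπ, hvisiti⟩ := nextVisit_mem hπ i
  have hvisit := nextVisit_lt_of_waitTime_le hw hπ (show i < i + (j - i) by omega) hwait
  refine ⟨lasso r N i (j - i), isRun_lasso hrun (hNf.trans hif.symm) hcyc (by omega),
    isAccepting_lasso (hif ▸ hfF) (by omega),
    isPrefixSuffix_lasso (hif ▸ hfF) (hNf.trans hif.symm)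
      (fun n hn h => (nextVisit_le (h.trans hif : r n = f) n.zero_le).not_gt hn) hcyc (by omega)
      (fun k hk hkT h => (nextVisit_le (h.trans hif : r (i + k) = f) (by omega)).not_gt
        (show i + k < j by omega)), ?_⟩
  rw [hc]
  refine runCost_le_of_revisitsWithin (fun u v => (hw u v).le)
    (revisitsWithin_lasso (fun u v => (hw u v).le) hπ hrev hMi hcyc (by omega) hwait)
    ⟨N + (nextVisit {k | r k ∈ Sπ} i - i), le_add_right le_rfl, ?_⟩
  rwa [lasso_add_of_le hcyc (by omega), Nat.add_sub_cancel' hvisiti]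

/-- If some accepting run of the (finite) product automaton has
finite cost, then there exists an accepting run in prefix-suffix structure whose
cost is at most the infimum of the costs of all accepting runs. -/
theorem exists_optimal_prefix_suffix_run
    {V : Type*} [Fintype V]
    (E : V → V → Prop) (w : V → V → ℝ) (hw : ∀ u v, 0 < w u v)
    (S0 F Sπ : Set V)
    (hex : ∃ r : ℕ → V, IsRun E S0 r ∧ IsAccepting F r ∧ runCost w Sπ r < ⊤) :
    ∃ ρ : ℕ → V, IsRun E S0 ρ ∧ IsAccepting F ρ ∧ IsPrefixSuffix F ρ ∧
      runCost w Sπ ρ ≤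
        sInf {c : EReal | ∃ r : ℕ → V, IsRun E S0 r ∧ IsAccepting F r ∧ runCost w Sπ r = c} := by
  obtain ⟨r₀, hr₀run, hr₀acc, hr₀cost⟩ := hex
  have : Nonempty (V × V) := ⟨(r₀ 0, r₀ 0)⟩
  obtain ⟨⟨u₀, v₀⟩, hmin⟩ := Finite.exists_min fun p : V × V => w p.1 p.2
  have hwm : ∀ u v, w u₀ v₀ ≤ w u v := fun u v => hmin (u, v)
  obtain ⟨b, hr₀b, -⟩ := EReal.lt_iff_exists_real_btwn.1 hr₀cost
  set S := {c : EReal | ∃ r : ℕ → V, IsRun E S0 r ∧ IsAccepting F r ∧ runCost w Sπ r = c}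
  have hr₀S : runCost w Sπ r₀ ∈ S := ⟨r₀, hr₀run, hr₀acc, rfl⟩
  have hfin : (S ∩ Set.Iic (runCost w Sπ r₀)).Finite := by
    refine ((walkWeights_finite w ⌈b / w u₀ v₀⌉₊).image (↑)).subset ?_
    rintro _ ⟨⟨r, -, -, rfl⟩, hr⟩
    obtain ⟨-, c, hc, hrc, -⟩ :=
      runCost_mem_walkWeights_and_revisitsWithin (hw u₀ v₀) hwm (hr.trans_lt hr₀b)
    exact ⟨c, hc, hrc.symm⟩
  obtain ⟨_, ⟨r, hrun, hacc, rfl⟩, hleast⟩ := exists_isLeast_of_finite_inter_Iic hr₀S hfin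
  obtain ⟨ρ, hρrun, hρacc, hρps, hρcost⟩ :=
    exists_prefixSuffix_runCost_le (hw u₀ v₀) hwm hrun hacc ((hleast hr₀S).trans_lt hr₀cost)
  exact ⟨ρ, hρrun, hρacc, hρps, hρcost.trans (le_sInf hleast)⟩
end

section
/- Every finite cycle that is repeated infinitely in the suffix of a finite-cost accepting run of the product automaton, starting and ending at accepting state f with no intermediate occurrence of f, must contain at least one state in S_{P,π}. -/
open scoped Classical

/-- In a finite-cost accepting run of the product automaton, every
finite cycle that is repeated forever in the suffix — starting and ending at the
accepting state `f = r N` with no intermediate occurrence of `f` — must contain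
at least one state of `S_{P,π}`. -/
theorem repeated_cycle_contains_optimizing_state
    {V : Type*} [Fintype V]
    (E : V → V → Prop) (w : V → V → ℝ) (hw : ∀ u v, 0 < w u v)
    (S0 F Sπ : Set V)
    (r : ℕ → V) (N T : ℕ)
    (hrun : r 0 ∈ S0 ∧ ∀ i, E (r i) (r (i+1)))
    (hacc : ∀ M, ∃ n ≥ M, r n ∈ F)
    (hT : 0 < T) (hf : r N ∈ F)
    (hperiodic : ∀ i ≥ N, r (i + T) = r i)
    (hnof : ∀ i, N < i → i < N + T → r i ≠ r N)
    (hfin : runCost w Sπ r < ⊤) :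
    ∃ i, N ≤ i ∧ i < N + T ∧ r i ∈ Sπ := by
  by_contra h
  push_neg at h
  have key : ∀ j, N ≤ j → r j ∉ Sπ := by
    intro j
    induction j using Nat.strong_induction_on with
    | _ j ih =>
      intro hj
      by_cases hlt : j < N + T
      · exact h j hj hlt
      · have hj' : N ≤ j - T := by omega
        have heq : r j = r (j - T) := by
          have := hperiodic (j - T) hj'
          rwa [Nat.sub_add_cancel (by omega)] at this
        rw [heq]
        exact ih (j - T) (by omega) hj'
  have hfinset : {i | r i ∈ Sπ}.Finite := by
    apply (Set.finite_Iio N).subset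
    intro i hi
    simp only [Set.mem_Iio]
    by_contra hc
    exact key i (by omega) hi
  have : runCost w Sπ r = ⊤ := by
    rw [runCost, if_neg (Set.not_infinite.mpr hfinset)]
  rw [this] at hfin
  exact lt_irrefl _ hfin
end

section
/- For vertices s1, s2 in a finite positively-weighted directed graph G and S ⊆ V containing s1 and s2, the optimal S-bottleneck value b_S(s1,s2) equals the bottleneck shortest path distance from s1 to s2 in the auxiliary complete graph G_S on vertex set S whose edge (u,v) has weight d(u,v) (the shortest-path distance in G), where the bottleneck distance in G_S is the minimum over s1–s2 paths in G_S of the maximum edge weight on the path. -/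
open scoped Classical

/-- A finite path of length `n` from `u` to `v` following edges of `E`. -/
def IsPath {V : Type*} (E : V → V → Prop) (u v : V) (n : ℕ) (p : ℕ → V) : Prop :=
  p 0 = u ∧ p n = v ∧ ∀ i < n, E (p i) (p (i+1))

/-- Total weighted length of the first `n` edges of a path. -/
noncomputable def pathLen {V : Type*} (w : V → V → ℝ) (n : ℕ) (p : ℕ → V) : ℝ :=
  ∑ i ∈ Finset.range n, w (p i) (p (i+1))

/-- Shortest weighted path distance from `u` to `v`; `⊤` if no path exists. -/
noncomputable def dist' {V : Type*} (E : V → V → Prop) (w : V → V → ℝ) (u v : V) : EReal :=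
  sInf {x : EReal | ∃ n p, IsPath E u v n p ∧ 0 < n ∧ x = ((pathLen w n p : ℝ) : EReal)}

/-- Maximum gap between consecutive `S`-visits along a finite path
(endpoints counted as visits when in `S`). -/
noncomputable def maxSGap {V : Type*} (w : V → V → ℝ) (S : Set V) (n : ℕ) (p : ℕ → V) : EReal :=
  sSup {x : EReal | ∃ i j, i < j ∧ j ≤ n ∧ p i ∈ S ∧ p j ∈ S ∧
    (∀ k, i < k → k < j → p k ∉ S) ∧
    x = ((∑ l ∈ Finset.Ico i j, w (p l) (p (l+1)) : ℝ) : EReal)}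

/-- `b_S(u,v)`: minimum over `G`-paths from `u` to `v` of the maximum weighted
gap between consecutive `S`-visits. -/
noncomputable def bS {V : Type*} (E : V → V → Prop) (w : V → V → ℝ) (S : Set V)
    (u v : V) : EReal :=
  sInf {x : EReal | ∃ n p, IsPath E u v n p ∧ 0 < n ∧ x = maxSGap w S n p}

lemma maxSGap_le_pathLen {V : Type*} (w : V → V → ℝ) (S : Set V)
    (hw : ∀ u v, 0 ≤ w u v) (n : ℕ) (p : ℕ → V) :
    maxSGap w S n p ≤ ((pathLen w n p : ℝ) : EReal) := by
  apply sSup_le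
  rintro x ⟨i, j, hij, hjn, -, -, -, rfl⟩
  rw [EReal.coe_le_coe_iff]
  apply Finset.sum_le_sum_of_subset_of_nonneg
  · intro l hl
    simp only [Finset.mem_Ico, Finset.mem_range] at *
    omega
  · intros; exact hw _ _

lemma concat_path {V : Type*} (E : V → V → Prop) (w : V → V → ℝ) (S : Set V)
    {u v x : V} {a b : ℕ} {p r : ℕ → V}
    (hp : IsPath E u v a p) (hr : IsPath E v x b r) (hv : v ∈ S) :
    IsPath E u x (a+b) (fun k => if k ≤ a then p k else r (k - a)) ∧
    maxSGap w S (a+b) (fun k => if k ≤ a then p k else r (k - a)) ≤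
      max (maxSGap w S a p) (maxSGap w S b r) := by
  obtain ⟨hp0, hpa, hpe⟩ := hp
  obtain ⟨hr0, hrb, hre⟩ := hr
  set P : ℕ → V := fun k => if k ≤ a then p k else r (k - a) with hP
  have hPa : ∀ k, k ≤ a → P k = p k := by intro k hk; simp [hP, hk]
  have hPb : ∀ k, a ≤ k → P k = r (k - a) := by
    intro k hk
    rcases eq_or_lt_of_le hk with h | h
    · subst h; simp [hP, hpa, hr0]
    · simp [hP, Nat.not_le.mpr h]
  constructor
  · refine ⟨by rw [hPa 0 (Nat.zero_le _)]; exact hp0, by rw [hPb (a+b) (Nat.le_add_right _ _)]; simpa, ?_⟩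
    intro i hi
    by_cases hia : i < a
    · rw [hPa i (le_of_lt hia), hPa (i+1) hia]
      exact hpe i hia
    · push_neg at hia
      rw [hPb i hia, hPb (i+1) (le_trans hia (Nat.le_succ _))]
      have : i + 1 - a = (i - a) + 1 := by omega
      rw [this]
      exact hre (i - a) (by omega)
  · apply sSup_le
    rintro y ⟨i, j, hij, hjn, hiS, hjS, hint, rfl⟩
    by_cases hja : j ≤ a
    · refine le_trans (le_sSup ?_) (le_max_left _ _)
      refine ⟨i, j, hij, hja, ?_, ?_, ?_, ?_⟩
      · rwa [← hPa i (by omega)]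
      · rwa [← hPa j hja]
      · intro k h1 h2; rw [← hPa k (by omega)]; exact hint k h1 h2
      · congr 1
        apply Finset.sum_congr rfl
        intro l hl
        simp only [Finset.mem_Ico] at hl
        rw [hPa l (by omega), hPa (l+1) (by omega)]
    · push_neg at hja
      have hai : a ≤ i := by
        by_contra h
        push_neg at h
        exact hint a h hja (by rw [hPa a le_rfl, hpa]; exact hv)
      refine le_trans (le_sSup ?_) (le_max_right _ _)
      refine ⟨i - a, j - a, by omega, by omega, ?_, ?_, ?_, ?_⟩
      · rwa [← hPb i hai]
      · rwa [← hPb j (by omega)]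
      · intro k h1 h2
        have := hint (a + k) (by omega) (by omega)
        rwa [hPb (a + k) (by omega), Nat.add_sub_cancel_left] at this
      · congr 1
        rw [Finset.sum_Ico_eq_sum_range, Finset.sum_Ico_eq_sum_range]
        have hc : j - i = (j - a) - (i - a) := by omega
        rw [← hc]
        apply Finset.sum_congr rfl
        intro k hk
        rw [hPb (i + k) (by omega), hPb (i + k + 1) (by omega)]
        congr 2 <;> omega

lemma paths_join {V : Type*} (E : V → V → Prop) (w : V → V → ℝ) (S : Set V)
    (hw : ∀ u v, 0 ≤ w u v) (c : EReal) :
    ∀ n, 0 < n → ∀ q : ℕ → V, (∀ i ≤ n, q i ∈ S) →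
    (∀ i < n, ∃ m p, IsPath E (q i) (q (i+1)) m p ∧ 0 < m ∧
      ((pathLen w m p : ℝ) : EReal) ≤ c) →
    ∃ m p, IsPath E (q 0) (q n) m p ∧ 0 < m ∧ maxSGap w S m p ≤ c := by
  intro n
  induction n with
  | zero => omega
  | succ k ih =>
    intro _ q hqS hseg
    obtain ⟨m2, p2, hp2, hm2, hl2⟩ := hseg k (Nat.lt_succ_self k)
    have hg2 : maxSGap w S m2 p2 ≤ c :=
      le_trans (maxSGap_le_pathLen w S hw m2 p2) hl2
    rcases Nat.eq_zero_or_pos k with hk | hk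
    · subst hk
      exact ⟨m2, p2, hp2, hm2, hg2⟩
    · obtain ⟨m1, p1, hp1, hm1, hg1⟩ :=
        ih hk q (fun i hi => hqS i (le_trans hi (Nat.le_succ _)))
          (fun i hi => hseg i (by omega))
      obtain ⟨hpath, hgap⟩ := concat_path E w S hp1 hp2 (hqS k (Nat.le_succ _))
      exact ⟨m1 + m2, _, hpath, by omega,
        le_trans hgap (max_le hg1 hg2)⟩

/-- `b_S(s1,s2)` equals the bottleneck shortest path distance from
`s1` to `s2` in the auxiliary complete graph `G_S` on vertex set `S`, where the
weight of edge `(u,v)` is the shortest-path distance `d(u,v)` in `G`, and the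
bottleneck distance in `G_S` is the minimum over `s1`–`s2` paths in `G_S` of the
maximum edge weight on the path. -/
theorem bS_eq_auxiliary_bottleneck
    {V : Type*} [Fintype V]
    (E : V → V → Prop) (w : V → V → ℝ) (hw : ∀ u v, 0 < w u v)
    (S : Set V) (s1 s2 : V)
    (hs1 : s1 ∈ S) (hs2 : s2 ∈ S)
    (hreach : ∃ n p, IsPath E s1 s2 n p ∧ 0 < n) :
    bS E w S s1 s2 =
      sInf {x : EReal | ∃ (n : ℕ) (q : ℕ → V), 0 < n ∧
        q 0 = s1 ∧ q n = s2 ∧ (∀ i ≤ n, q i ∈ S) ∧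
        x = (Finset.range n).sup (fun i => dist' E w (q i) (q (i+1)))} := by
  apply le_antisymm
  · apply le_sInf
    rintro x ⟨n, q, hn, hq0, hqn, hqS, rfl⟩
    apply le_of_forall_gt_imp_ge_of_dense
    intro c hc
    have hseg : ∀ i < n, ∃ m p, IsPath E (q i) (q (i+1)) m p ∧ 0 < m ∧
        ((pathLen w m p : ℝ) : EReal) ≤ c := by
      intro i hi
      have h1 : dist' E w (q i) (q (i+1)) < c :=
        lt_of_le_of_lt (Finset.le_sup (f := fun i => dist' E w (q i) (q (i+1))) (Finset.mem_range.mpr hi)) hc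
      rw [dist'] at h1
      obtain ⟨x, ⟨m, p, hp, hm, rfl⟩, hx⟩ := sInf_lt_iff.mp h1
      exact ⟨m, p, hp, hm, le_of_lt hx⟩
    obtain ⟨m, p, hpath, hm, hg⟩ :=
      paths_join E w S (fun u v => (hw u v).le) c n hn q hqS hseg
    rw [hq0, hqn] at hpath
    exact le_trans (sInf_le ⟨m, p, hpath, hm, rfl⟩) hg
  · apply le_sInf
    rintro x ⟨n, p, hp, hn, rfl⟩
    set nv : ℕ → ℕ := fun i => if h : ∃ k, i < k ∧ k ≤ n ∧ p k ∈ S then Nat.find h else n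
      with hnv
    have fact1 : ∀ i, i < n → i < nv i ∧ nv i ≤ n ∧ p (nv i) ∈ S ∧
        ∀ k, i < k → k < nv i → p k ∉ S := by
      intro i hi
      have h : ∃ k, i < k ∧ k ≤ n ∧ p k ∈ S := ⟨n, hi, le_rfl, by rw [hp.2.1]; exact hs2⟩
      have he : nv i = Nat.find h := by rw [hnv]; exact dif_pos h
      rw [he]
      obtain ⟨h1, h2, h3⟩ := Nat.find_spec h
      exact ⟨h1, h2, h3, fun k hk1 hk2 hkS => Nat.find_min h hk2 ⟨hk1, by omega, hkS⟩⟩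
    have fact2 : ∀ i, nv i ≤ n := by
      intro i
      by_cases h : ∃ k, i < k ∧ k ≤ n ∧ p k ∈ S
      · have he : nv i = Nat.find h := by rw [hnv]; exact dif_pos h
        rw [he]; exact (Nat.find_spec h).2.1
      · have he : nv i = n := by rw [hnv]; exact dif_neg h
        rw [he]
    set t : ℕ → ℕ := fun j => nv^[j] 0 with ht
    have hts : ∀ j, t (j+1) = nv (t j) := fun j => Function.iterate_succ_apply' nv j 0
    have ht0 : t 0 = 0 := rfl
    have tle : ∀ j, t j ≤ n := by
      intro j
      cases j with
      | zero => omega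
      | succ j => rw [hts]; exact fact2 _
    have hnvn : nv n = n := by
      rw [hnv]; exact dif_neg (by rintro ⟨k, hk1, hk2, -⟩; omega)
    have tmin : ∀ j, min j n ≤ t j := by
      intro j
      induction j with
      | zero => simp
      | succ j ih =>
        rcases lt_or_ge (t j) n with h | h
        · have h2 := (fact1 (t j) h).1
          have h3 := hts j
          omega
        · have hn' : t j = n := le_antisymm (tle j) h
          have : t (j+1) = n := by rw [hts, hn', hnvn]
          omega
    have htn : t n = n := by have := tmin n; have := tle n; omega
    have hex : ∃ j, t j = n := ⟨n, htn⟩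
    set m := Nat.find hex with hmdef
    have hm : t m = n := Nat.find_spec hex
    have hmlt : ∀ j, j < m → t j < n :=
      fun j hj => lt_of_le_of_ne (tle j) (Nat.find_min hex hj)
    have hm0 : 0 < m := by
      rcases Nat.eq_zero_or_pos m with h | h
      · rw [h] at hm; omega
      · exact h
    have visits : ∀ j, j ≤ m → p (t j) ∈ S := by
      intro j hj
      cases j with
      | zero => rw [ht0, hp.1]; exact hs1
      | succ j => rw [hts]; exact (fact1 (t j) (hmlt j (by omega))).2.2.1
    refine le_trans (sInf_le ⟨m, fun j => p (t j), hm0, by show p (t 0) = s1; rw [ht0, hp.1],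
      by show p (t m) = s2; rw [hm, hp.2.1], fun i hi => visits i hi, rfl⟩) ?_
    apply Finset.sup_le
    intro i hi
    rw [Finset.mem_range] at hi
    simp only []
    rw [hts i]
    obtain ⟨hAB, hBn, hBS, hintB⟩ := fact1 (t i) (hmlt i hi)
    have hd : dist' E w (p (t i)) (p (nv (t i))) ≤
        ((∑ l ∈ Finset.Ico (t i) (nv (t i)), w (p l) (p (l+1)) : ℝ) : EReal) := by
      apply sInf_le
      refine ⟨nv (t i) - t i, fun k => p (t i + k), ⟨by simp, ?_, ?_⟩, by omega, ?_⟩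
      · show p (t i + (nv (t i) - t i)) = p (nv (t i))
        congr 1; omega
      · intro k hk
        exact hp.2.2 (t i + k) (by omega)
      · rw [EReal.coe_eq_coe_iff, pathLen, Finset.sum_Ico_eq_sum_range]
        exact Finset.sum_congr rfl fun k _ => by rw [Nat.add_assoc]
    refine le_trans hd (le_sSup ?_)
    exact ⟨t i, nv (t i), hAB, hBn, visits i hi.le, hBS, hintB, rfl⟩
end

section
/- Suppose in the product automaton there exists a cycle through an accepting state f that is reachable from an initial state, contains at least one S_{P,π}-vertex, and has minimal S_{P,π}-bottleneck length B* among all such cycles through accepting states. Then the prefix-suffix run formed by any path from an initial state to f followed by infinite repetition of this cycle is an accepting run achieving cost C_P equal to B*, and no accepting run has cost strictly less than B*. -/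
open scoped Classical

/-- The `S`-bottleneck length of a cycle, given as an infinite periodic path. -/
noncomputable def SbotLen {V : Type*} (w : V → V → ℝ) (S : Set V) (p : ℕ → V) : EReal :=
  if ∃ i, p i ∈ S then
    sSup {x : EReal | ∃ i j, i < j ∧ p i ∈ S ∧ p j ∈ S ∧
      (∀ k, i < k → k < j → p k ∉ S) ∧
      x = ((timeSeq w p j - timeSeq w p i : ℝ) : EReal)}
  else ⊤

/-! Beyond its prefix the prefix-suffix run repeats the cycle, so its gaps between consecutive
`Sπ`-visits are eventually gaps of the cycle, and every gap of the cycle recurs arbitrarily late: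
the cost of the run is the bottleneck length of the cycle.

Conversely, if an accepting run has cost below `x`, all its gaps from some time on are below `x`.
Some `Sπ`-vertex recurs infinitely often; cutting the run between two of its occurrences that
enclose an accepting visit yields a reachable closed walk, which, rotated to start at the accepting
state, is a cycle whose gaps are gaps of the run. Its bottleneck length is at most `x`, so by
minimality the bottleneck length of the given cycle is at most `x` as well. -/

section Visits

variable {V : Type*}

structure ConsecutiveVisits (S : Set V) (p : ℕ → V) (i j : ℕ) : Prop where
  lt : i < j
  left_mem : p i ∈ S
  right_mem : p j ∈ S
  not_mem : ∀ k, i < k → k < j → p k ∉ S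

namespace ConsecutiveVisits

variable {S : Set V} {p q : ℕ → V} {i j : ℕ}

theorem le_of_mem {m : ℕ} (h : ConsecutiveVisits S p i j) (him : i < m) (hm : p m ∈ S) :
    j ≤ m :=
  not_lt.1 fun hmj => h.not_mem m him hmj hm

theorem shift_iff {a : ℕ} :
    ConsecutiveVisits S (fun t => p (a + t)) i j ↔ ConsecutiveVisits S p (a + i) (a + j) := by
  constructor
  · intro h
    refine ⟨by have := h.lt; omega, h.left_mem, h.right_mem, fun k hik hkj => ?_⟩
    obtain ⟨k, rfl⟩ := Nat.exists_eq_add_of_le (by omega : a ≤ k)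
    exact h.not_mem k (by omega) (by omega)
  · intro h
    exact ⟨by have := h.lt; omega, h.left_mem, h.right_mem,
      fun k hik hkj => h.not_mem (a + k) (by omega) (by omega)⟩

theorem congr (h : ConsecutiveVisits S p i j) (hpq : ∀ t ≤ j, p t = q t) :
    ConsecutiveVisits S q i j :=
  ⟨h.lt, hpq i h.lt.le ▸ h.left_mem, hpq j le_rfl ▸ h.right_mem,
    fun k hik hkj => hpq k hkj.le ▸ h.not_mem k hik hkj⟩

theorem nth_count (h : ConsecutiveVisits S p i j) :
    Nat.nth (fun t => p t ∈ S) (Nat.count (fun t => p t ∈ S) i) = i ∧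
      Nat.nth (fun t => p t ∈ S) (Nat.count (fun t => p t ∈ S) i + 1) = j := by
  refine ⟨Nat.nth_count h.left_mem, ?_⟩
  have hcount : Nat.count (fun t => p t ∈ S) (i + 1) = Nat.count (fun t => p t ∈ S) i + 1 := by
    simp [Nat.count_succ, h.left_mem]
  rw [← hcount, Nat.nth_count_eq_sInf]
  refine le_antisymm (Nat.sInf_le ⟨h.right_mem, h.lt⟩) (le_csInf ⟨j, h.right_mem, h.lt⟩ ?_)
  rintro k ⟨hk, hik⟩
  exact h.le_of_mem hik hk

end ConsecutiveVisits

theorem consecutiveVisits_nth {S : Set V} {p : ℕ → V} (hS : {t | p t ∈ S}.Infinite)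
    (n : ℕ) : ConsecutiveVisits S p (Nat.nth (fun t => p t ∈ S) n)
      (Nat.nth (fun t => p t ∈ S) (n + 1)) := by
  refine ⟨(Nat.nth_lt_nth hS).2 n.lt_succ_self, Nat.nth_mem_of_infinite hS _,
    Nat.nth_mem_of_infinite hS _, fun k hnk hkn hk => ?_⟩
  rw [← Nat.nth_count (p := fun t => p t ∈ S) hk, Nat.nth_lt_nth hS] at hnk hkn
  omega

end Visits

section Cost

variable {V : Type*} {w : V → V → ℝ}

theorem timeSeq_shift (p : ℕ → V) (a : ℕ) :
    ∀ n, timeSeq w (fun t => p (a + t)) n = timeSeq w p (a + n) - timeSeq w p a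
  | 0 => by simp [timeSeq]
  | n + 1 => by
    rw [timeSeq, timeSeq_shift p a n, ← Nat.add_assoc, timeSeq]
    ring

theorem timeSeq_shift_sub (p : ℕ → V) (a i j : ℕ) :
    timeSeq w (fun t => p (a + t)) j - timeSeq w (fun t => p (a + t)) i =
      timeSeq w p (a + j) - timeSeq w p (a + i) := by
  simp only [timeSeq_shift]
  ring

theorem timeSeq_congr {p q : ℕ → V} :
    ∀ {n}, (∀ t ≤ n, p t = q t) → timeSeq w p n = timeSeq w q n
  | 0, _ => rfl
  | n + 1, h => by
    rw [timeSeq, timeSeq, timeSeq_congr fun t ht => h t (by omega), h n (by omega),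
      h (n + 1) le_rfl]

variable {S : Set V} {r : ℕ → V}

theorem runCost_eq_limsup (hS : {t | r t ∈ S}.Infinite) :
    runCost w S r = Filter.limsup
      (fun n => ((timeSeq w r (Nat.nth (fun t => r t ∈ S) (n + 1))
        - timeSeq w r (Nat.nth (fun t => r t ∈ S) n) : ℝ) : EReal)) Filter.atTop :=
  if_pos hS

theorem runCost_le_of_consecutiveVisits (hS : {t | r t ∈ S}.Infinite) {b : EReal} (M : ℕ)
    (h : ∀ i j, M ≤ i → ConsecutiveVisits S r i j →
      ((timeSeq w r j - timeSeq w r i : ℝ) : EReal) ≤ b) :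
    runCost w S r ≤ b := by
  rw [runCost_eq_limsup hS]
  refine Filter.limsup_le_of_le (by isBoundedDefault)
    (Filter.eventually_atTop.2 ⟨M, fun n hn => ?_⟩)
  exact h _ _ (hn.trans (Nat.le_nth fun hf => absurd hf hS)) (consecutiveVisits_nth hS n)

theorem le_runCost_of_consecutiveVisits {x : ℝ}
    (h : ∀ M, ∃ i j, M ≤ i ∧ ConsecutiveVisits S r i j ∧
      timeSeq w r j - timeSeq w r i = x) :
    (x : EReal) ≤ runCost w S r := by
  have hS : {t | r t ∈ S}.Infinite := Set.infinite_of_forall_exists_gt fun M => by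
    obtain ⟨i, j, hMi, hij, -⟩ := h (M + 1)
    exact ⟨i, hij.left_mem, by omega⟩
  rw [runCost_eq_limsup hS]
  refine Filter.le_limsup_of_frequently_le (Filter.frequently_atTop.2 fun K => ?_)
    (by isBoundedDefault)
  obtain ⟨i, j, hKi, hij, rfl⟩ := h (Nat.nth (fun t => r t ∈ S) K)
  obtain ⟨hi, hj⟩ := hij.nth_count
  refine ⟨_, (Nat.nth_le_nth hS).1 (hi ▸ hKi), ?_⟩
  rw [hi, hj]

theorem exists_consecutiveVisits_lt_of_runCost_lt {x : ℝ} (hx : runCost w S r < x) :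
    {t | r t ∈ S}.Infinite ∧ ∃ M, ∀ i j, M ≤ i → ConsecutiveVisits S r i j →
      timeSeq w r j - timeSeq w r i < x := by
  have hS : {t | r t ∈ S}.Infinite := by
    by_contra hS
    rw [runCost, if_neg hS] at hx
    exact not_top_lt hx
  rw [runCost_eq_limsup hS] at hx
  obtain ⟨M, hM⟩ :=
    Filter.eventually_atTop.1 (Filter.eventually_lt_of_limsup_lt hx (by isBoundedDefault))
  refine ⟨hS, Nat.nth (fun t => r t ∈ S) M, fun i j hMi hij => ?_⟩
  obtain ⟨hi, hj⟩ := hij.nth_count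
  have := hM _ ((Nat.nth_le_nth hS).1 (hi ▸ hMi))
  rw [hi, hj] at this
  exact_mod_cast this

theorem le_SbotLen {p : ℕ → V} {i j : ℕ} (h : ConsecutiveVisits S p i j) :
    ((timeSeq w p j - timeSeq w p i : ℝ) : EReal) ≤ SbotLen w S p := by
  rw [SbotLen, if_pos ⟨i, h.left_mem⟩]
  exact le_sSup ⟨i, j, h.lt, h.left_mem, h.right_mem, h.not_mem, rfl⟩

theorem SbotLen_le {p : ℕ → V} {b : EReal} (hS : ∃ i, p i ∈ S)
    (h : ∀ i j, ConsecutiveVisits S p i j →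
      ((timeSeq w p j - timeSeq w p i : ℝ) : EReal) ≤ b) :
    SbotLen w S p ≤ b := by
  rw [SbotLen, if_pos hS]
  refine sSup_le ?_
  rintro - ⟨i, j, hij, hi, hj, hbetween, rfl⟩
  exact h i j ⟨hij, hi, hj, hbetween⟩

end Cost

section Periodic

variable {V : Type*} {w : V → V → ℝ} {S : Set V} {c : ℕ → V} {T : ℕ}

theorem Function.Periodic.shift_nat_mul (hc : Function.Periodic c T) (k : ℕ) :
    (fun t => c (k * T + t)) = c :=
  funext fun t => by rw [add_comm]; exact hc.nat_mul k t

theorem ConsecutiveVisits.exists_lt_period (hc : Function.Periodic c T) (hT : 0 < T) {i j : ℕ}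
    (h : ConsecutiveVisits S c i j) : ∃ i' j', i' < T ∧ ConsecutiveVisits S c i' j' ∧
      timeSeq w c j' - timeSeq w c i' = timeSeq w c j - timeSeq w c i := by
  have hi : i / T * T + i % T = i := Nat.div_add_mod' i T
  have hj : i / T * T + (j - i / T * T) = j := by have := h.lt; omega
  rw [← hi, ← hj, ← ConsecutiveVisits.shift_iff, hc.shift_nat_mul] at h
  refine ⟨i % T, j - i / T * T, Nat.mod_lt i hT, h, ?_⟩
  conv_rhs => rw [← hi, ← hj, ← timeSeq_shift_sub, hc.shift_nat_mul]

theorem runCost_eq_SbotLen_of_periodic (hc : Function.Periodic c T) (hT : 0 < T)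
    (hS : ∃ i, c i ∈ S) {ρ : ℕ → V} {N : ℕ} (hρ : (fun t => ρ (N + t)) = c) :
    runCost w S ρ = SbotLen w S c := by
  have hlate : ∀ M i j, ConsecutiveVisits S c i j →
      M ≤ N + (M * T + i) ∧ ConsecutiveVisits S ρ (N + (M * T + i)) (N + (M * T + j)) ∧
      timeSeq w ρ (N + (M * T + j)) - timeSeq w ρ (N + (M * T + i)) =
        timeSeq w c j - timeSeq w c i := by
    intro M i j hij
    refine ⟨by nlinarith, ?_, ?_⟩
    · rw [← ConsecutiveVisits.shift_iff, hρ, ← ConsecutiveVisits.shift_iff, hc.shift_nat_mul]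
      exact hij
    · rw [← timeSeq_shift_sub, hρ, ← timeSeq_shift_sub, hc.shift_nat_mul]
  apply le_antisymm
  · obtain ⟨i0, hi0⟩ := hS
    have hinf : {t | ρ t ∈ S}.Infinite := Set.infinite_of_forall_exists_gt fun M => by
      refine ⟨N + ((M + 1) * T + i0), ?_, by nlinarith⟩
      rwa [Set.mem_ofPred, congrFun hρ, congrFun (hc.shift_nat_mul _)]
    refine runCost_le_of_consecutiveVisits hinf N fun i j hNi hij => ?_
    obtain ⟨i, rfl⟩ := Nat.exists_eq_add_of_le hNi
    obtain ⟨j, rfl⟩ := Nat.exists_eq_add_of_le (hNi.trans hij.lt.le)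
    rw [← ConsecutiveVisits.shift_iff, hρ] at hij
    rw [← timeSeq_shift_sub, hρ]
    exact le_SbotLen hij
  · refine SbotLen_le hS fun i j hij => le_runCost_of_consecutiveVisits fun M => ?_
    obtain ⟨hM, hvis, hlen⟩ := hlate M i j hij
    exact ⟨_, _, hM, hvis, hlen⟩

end Periodic

theorem Set.Infinite.exists_mem_infinite_fiber {α β : Type*} [Finite β] {s : Set β}
    {f : α → β} (hs : (f ⁻¹' s).Infinite) : ∃ y ∈ s, (f ⁻¹' {y}).Infinite := by
  by_contra! h
  exact hs ((Set.toFinite s).preimage' fun y hy => h y hy)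

section Cycle

variable {V : Type*} {w : V → V → ℝ} {S : Set V}

def cycleFrom (r : ℕ → V) (a T : ℕ) : ℕ → V := fun t => r (a + t % T)

variable {r : ℕ → V} {a T : ℕ}

theorem cycleFrom_periodic : Function.Periodic (cycleFrom r a T) T := fun t => by
  simp [cycleFrom]

theorem cycleFrom_eq (hloop : r (a + T) = r a) {t : ℕ} (ht : t ≤ T) :
    cycleFrom r a T t = r (a + t) := by
  rcases ht.lt_or_eq with ht | rfl
  · rw [cycleFrom, Nat.mod_eq_of_lt ht]
  · rw [cycleFrom, Nat.mod_self, Nat.add_zero, hloop]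

theorem cycleFrom_edge {E : V → V → Prop} (hr : ∀ i, E (r i) (r (i + 1))) (hT : 0 < T)
    (hloop : r (a + T) = r a) (t : ℕ) : E (cycleFrom r a T t) (cycleFrom r a T (t + 1)) := by
  have hsucc : cycleFrom r a T (t + 1) = cycleFrom r a T (t % T + 1) := by
    simp only [cycleFrom, Nat.mod_add_mod]
  rw [hsucc, cycleFrom_eq hloop (Nat.mod_lt t hT)]
  exact hr _

theorem ConsecutiveVisits.of_cycleFrom (hT : 0 < T) (hloop : r (a + T) = r a) (ha : r a ∈ S)
    {i j : ℕ} (h : ConsecutiveVisits S (cycleFrom r a T) i j) :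
    ∃ i' j', ConsecutiveVisits S r (a + i') (a + j') ∧
      timeSeq w r (a + j') - timeSeq w r (a + i') =
        timeSeq w (cycleFrom r a T) j - timeSeq w (cycleFrom r a T) i := by
  obtain ⟨i', j', hi'T, h', hlen⟩ := h.exists_lt_period (w := w) cycleFrom_periodic hT
  have hj'T : j' ≤ T := h'.le_of_mem hi'T (by rwa [cycleFrom_eq hloop le_rfl, hloop])
  have hagree : ∀ t ≤ j', cycleFrom r a T t = r (a + t) :=
    fun t ht => cycleFrom_eq hloop (ht.trans hj'T)
  refine ⟨i', j', ConsecutiveVisits.shift_iff.1 (h'.congr hagree), ?_⟩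
  rw [← hlen, ← timeSeq_shift_sub, timeSeq_congr hagree,
    timeSeq_congr fun t ht => hagree t (ht.trans h'.lt.le)]

theorem exists_cycle_of_runCost_lt [Finite V] {E : V → V → Prop} {S0 F : Set V}
    (hr : IsRun E S0 r) (hacc : IsAccepting F r) {x : ℝ} (hx : runCost w S r < x) :
    ∃ (c : ℕ → V) (T : ℕ), 0 < T ∧ (∀ i, E (c i) (c (i + 1))) ∧
      (∀ i, c (i + T) = c i) ∧ c 0 ∈ F ∧ (∃ i < T, c i ∈ S) ∧
      (∃ (pre : ℕ → V) (N : ℕ), pre 0 ∈ S0 ∧ (∀ i < N, E (pre i) (pre (i + 1))) ∧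
        pre N = c 0) ∧
      SbotLen w S c ≤ x := by
  obtain ⟨hS, M, hM⟩ := exists_consecutiveVisits_lt_of_runCost_lt hx
  obtain ⟨y, hyS, hy⟩ := hS.exists_mem_infinite_fiber
  obtain ⟨a, rfl, hMa⟩ := hy.exists_gt M
  obtain ⟨k, hak, hkF⟩ := hacc (a + 1)
  obtain ⟨b, hb, hkb⟩ := hy.exists_gt k
  have hT : 0 < b - a := by omega
  have hloop : r (a + (b - a)) = r a := by rwa [Nat.add_sub_cancel' (by omega)]
  have hk : cycleFrom r a (b - a) (k - a + 0) = r k := by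
    rw [cycleFrom_eq hloop (by omega)]
    congr 1
    omega
  have hvisit : cycleFrom r a (b - a) (k - a + (b - a - (k - a))) ∈ S := by
    rwa [show k - a + (b - a - (k - a)) = b - a by omega, cycleFrom_eq hloop le_rfl, hloop]
  refine ⟨fun t => cycleFrom r a (b - a) (k - a + t), b - a, hT,
    fun t => cycleFrom_edge hr.2 hT hloop _,
    fun t => by simp only [← Nat.add_assoc, cycleFrom_periodic _],
    show cycleFrom r a (b - a) (k - a + 0) ∈ F from hk ▸ hkF,
    ⟨b - a - (k - a), by omega, hvisit⟩, ⟨r, k, hr.1, fun i _ => hr.2 i, hk.symm⟩,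
    SbotLen_le ⟨_, hvisit⟩ fun i j hij => ?_⟩
  rw [ConsecutiveVisits.shift_iff] at hij
  obtain ⟨i', j', hvis, hlen⟩ := hij.of_cycleFrom hT hloop hyS
  rw [timeSeq_shift_sub, ← hlen]
  exact_mod_cast (hM _ _ (by omega) hvis).le

end Cycle

section PrefixSuffix

variable {V : Type*} {E : V → V → Prop} {S0 F : Set V} {pre c : ℕ → V} {N T : ℕ}

def prefixSuffix (pre c : ℕ → V) (N : ℕ) : ℕ → V :=
  fun i => if i < N then pre i else c (i - N)

theorem prefixSuffix_add (t : ℕ) : prefixSuffix pre c N (N + t) = c t := by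
  simp [prefixSuffix]

theorem prefixSuffix_of_le (hpreN : pre N = c 0) {i : ℕ} (hi : i ≤ N) :
    prefixSuffix pre c N i = pre i := by
  rcases hi.lt_or_eq with hi | rfl
  · simp [prefixSuffix, hi]
  · simp [prefixSuffix, hpreN]

theorem isRun_prefixSuffix (hpre0 : pre 0 ∈ S0) (hpre : ∀ i < N, E (pre i) (pre (i + 1)))
    (hpreN : pre N = c 0) (hc : ∀ i, E (c i) (c (i + 1))) :
    IsRun E S0 (prefixSuffix pre c N) := by
  refine ⟨prefixSuffix_of_le hpreN (Nat.zero_le N) ▸ hpre0, fun i => ?_⟩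
  rcases lt_or_ge i N with hi | hi
  · rw [prefixSuffix_of_le hpreN hi.le, prefixSuffix_of_le hpreN hi]
    exact hpre i hi
  · obtain ⟨i, rfl⟩ := Nat.exists_eq_add_of_le hi
    rw [Nat.add_assoc, prefixSuffix_add, prefixSuffix_add]
    exact hc i

theorem isAccepting_prefixSuffix (hc : Function.Periodic c T) (hT : 0 < T) (hcF : c 0 ∈ F) :
    IsAccepting F (prefixSuffix pre c N) := fun n => by
  refine ⟨N + n * T, by nlinarith, ?_⟩
  rwa [prefixSuffix_add, ← Nat.cast_id n, hc.nat_mul_eq]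

end PrefixSuffix

theorem optimal_cycle_gives_optimal_run_general
    {V : Type*} [Fintype V]
    (E : V → V → Prop) (w : V → V → ℝ)
    (S0 FP Sπ : Set V)
    (c : ℕ → V) (T : ℕ) (hT : 0 < T)
    (hcedges : ∀ i, E (c i) (c (i+1)))
    (hcper : ∀ i, c (i + T) = c i)
    (hcf : c 0 ∈ FP)
    (hcS : ∃ i < T, c i ∈ Sπ)
    (pre : ℕ → V) (N : ℕ)
    (hpre0 : pre 0 ∈ S0)
    (hpreedges : ∀ i < N, E (pre i) (pre (i+1)))
    (hpreN : pre N = c 0)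
    (hmin : ∀ (c' : ℕ → V) (T' : ℕ), 0 < T' → (∀ i, E (c' i) (c' (i+1))) →
      (∀ i, c' (i + T') = c' i) → c' 0 ∈ FP → (∃ i < T', c' i ∈ Sπ) →
      (∃ (pre' : ℕ → V) (N' : ℕ), pre' 0 ∈ S0 ∧ (∀ i < N', E (pre' i) (pre' (i+1))) ∧
        pre' N' = c' 0) →
      SbotLen w Sπ c ≤ SbotLen w Sπ c') :
    IsRun E S0 (fun i => if i < N then pre i else c (i - N)) ∧
    IsAccepting FP (fun i => if i < N then pre i else c (i - N)) ∧
    runCost w Sπ (fun i => if i < N then pre i else c (i - N)) = SbotLen w Sπ c ∧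
    ∀ r' : ℕ → V, IsRun E S0 r' → IsAccepting FP r' →
      SbotLen w Sπ c ≤ runCost w Sπ r' := by
  obtain ⟨i0, -, hi0⟩ := hcS
  refine ⟨isRun_prefixSuffix hpre0 hpreedges hpreN hcedges, isAccepting_prefixSuffix hcper hT hcf,
    runCost_eq_SbotLen_of_periodic hcper hT ⟨i0, hi0⟩ (funext prefixSuffix_add),
    fun r hr hacc => ?_⟩
  refine EReal.le_of_forall_lt_iff_le.1 fun x hx => ?_
  obtain ⟨c', T', hT', hc'edges, hc'per, hc'f, hc'S, hc'pre, hc'x⟩ :=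
    exists_cycle_of_runCost_lt hr hacc hx
  exact (hmin c' T' hT' hc'edges hc'per hc'f hc'S hc'pre).trans hc'x

/-- Suppose the product automaton has a cycle `c` (period `T`)
through an accepting state `f = c 0`, reachable from an initial state by a
finite path `pre` of length `N`, containing an `S_{P,π}`-vertex, and of minimal
`S_{P,π}`-bottleneck length `B* = SbotLen c` among all such cycles.  Then the
prefix-suffix run obtained by following `pre` and then repeating `c` forever is
an accepting run of cost exactly `B*`, and no accepting run has cost less
than `B*`. -/
theorem optimal_cycle_gives_optimal_run
    {V : Type*} [Fintype V]
    (E : V → V → Prop) (w : V → V → ℝ) (hw : ∀ u v, 0 < w u v)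
    (S0 FP Sπ : Set V)
    (c : ℕ → V) (T : ℕ) (hT : 0 < T)
    (hcedges : ∀ i, E (c i) (c (i+1)))
    (hcper : ∀ i, c (i + T) = c i)
    (hcf : c 0 ∈ FP)
    (hcS : ∃ i < T, c i ∈ Sπ)
    (pre : ℕ → V) (N : ℕ)
    (hpre0 : pre 0 ∈ S0)
    (hpreedges : ∀ i < N, E (pre i) (pre (i+1)))
    (hpreN : pre N = c 0)
    (hmin : ∀ (c' : ℕ → V) (T' : ℕ), 0 < T' → (∀ i, E (c' i) (c' (i+1))) →
      (∀ i, c' (i + T') = c' i) → c' 0 ∈ FP → (∃ i < T', c' i ∈ Sπ) →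
      (∃ (pre' : ℕ → V) (N' : ℕ), pre' 0 ∈ S0 ∧ (∀ i < N', E (pre' i) (pre' (i+1))) ∧
        pre' N' = c' 0) →
      SbotLen w Sπ c ≤ SbotLen w Sπ c') :
    IsRun E S0 (fun i => if i < N then pre i else c (i - N)) ∧
    IsAccepting FP (fun i => if i < N then pre i else c (i - N)) ∧
    runCost w Sπ (fun i => if i < N then pre i else c (i - N)) = SbotLen w Sπ c ∧
    ∀ r' : ℕ → V, IsRun E S0 r' → IsAccepting FP r' →
      SbotLen w Sπ c ≤ runCost w Sπ r' :=
  optimal_cycle_gives_optimal_run_general E w S0 FP Sπ c T hT hcedges hcper hcf hcS pre N hpre0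
    hpreedges hpreN hmin
end
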